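/- Let F be a field containing a primitive e-th root of unity λ, and let e, g, d, j, v_1, v_2 be positive integers with v_1, v_2 > 1, v_1 v_2 ∣ g, g ∣ e, d ∣ e, gcd(v_1, v_2) = gcd(e, j) = gcd(v_1, d) = gcd(v_2, d) = 1. Let G ≤ GL_2(F) be the subgroup generated by the diagonal matrices A = diag(λ^{v_1}, λ^{j v_2}) and B = diag(λ^{g}, λ^{d g}). Then the minimal degree of invariants of G satisfies M_G = min{ a_1 + a_2 : a_1, a_2 ∈ ℕ, a_1 + a_2 > 0, v_1 a_1 + j v_2 a_2 ≡ 0 (mod e), g a_1 + d g a_2 ≡ 0 (mod e) }. -/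

import Mathlib

open MvPolynomial Matrix

/-- The action of `g ∈ GL_2(F)` on polynomials: `(g · f)(v) = f(g⁻¹ v)`. -/
noncomputable def glAct {n : ℕ} {F : Type} [Field F] (g : GL (Fin n) F)
    (f : MvPolynomial (Fin n) F) : MvPolynomial (Fin n) F :=
  aeval (fun i => ∑ j, ((g⁻¹ : GL (Fin n) F) : Matrix (Fin n) (Fin n) F) i j • X j) f

/-!
The diagonal matrix `diag(w)` multiplies the monomial `x^μ` by `∏ wᵢ^{μᵢ}`, so a polynomial is
invariant under a group of diagonal matrices iff each of its monomials is. The degrees of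
invariants are therefore the degrees of invariant monomials `x₁^{a₁} x₂^{a₂}`, and since `λ` has
order `e`, such a monomial is fixed by `A` and `B` exactly when the two congruences hold.
-/

theorem coeff_aeval_smul_X {R : Type*} [CommSemiring R] {n : ℕ} (c : Fin n → R)
    (f : MvPolynomial (Fin n) R) (μ : Fin n →₀ ℕ) :
    coeff μ (aeval (fun i => c i • X i) f) = (∏ i, c i ^ μ i) * coeff μ f := by
  induction f using MvPolynomial.induction_on' with
  | monomial ν a =>
    have hprod : (ν.prod fun i k => (c i • X i) ^ k) =
        C (ν.prod fun i k => c i ^ k) * ν.prod fun i k => (X i : MvPolynomial (Fin n) R) ^ k := by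
      simp only [Finsupp.prod, map_prod, ← Finset.prod_mul_distrib, smul_eq_C_mul, mul_pow, map_pow]
    rw [aeval_monomial, hprod, algebraMap_eq, ← mul_assoc, ← _root_.map_mul, ← monomial_eq,
      coeff_monomial, coeff_monomial, Finsupp.prod_fintype _ _ fun i => pow_zero (c i)]
    split_ifs with h
    · subst h; ring
    · ring
  | add p q hp hq => rw [map_add, coeff_add, coeff_add, hp, hq, mul_add]

section

variable {F : Type} [Field F] {n : ℕ}

theorem glAct_one (f : MvPolynomial (Fin n) F) : glAct 1 f = f := by
  have hX : (fun i => ∑ j, ((1 : GL (Fin n) F) : Matrix (Fin n) (Fin n) F) i j •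
      (X j : MvPolynomial (Fin n) F)) = X := by
    funext i
    simp [Matrix.one_apply, ite_smul]
  rw [glAct, inv_one, hX, aeval_X_left_apply]

theorem glAct_mul (x y : GL (Fin n) F) (f : MvPolynomial (Fin n) F) :
    glAct (x * y) f = glAct x (glAct y f) := by
  rw [glAct, glAct, glAct, ← AlgHom.comp_apply, comp_aeval]
  congr 2
  funext i
  simp only [map_sum, _root_.map_smul, aeval_X, _root_.mul_inv_rev, Units.val_mul,
    Matrix.mul_apply, Finset.sum_smul, Finset.smul_sum, smul_smul]
  rw [Finset.sum_comm]

def glStabilizer (f : MvPolynomial (Fin n) F) : Subgroup (GL (Fin n) F) where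
  carrier := {x | glAct x f = f}
  one_mem' := glAct_one f
  mul_mem' {x y} hx hy := by
    simp only [Set.mem_ofPred_eq] at *
    rw [glAct_mul, hy, hx]
  inv_mem' {x} hx := by
    simp only [Set.mem_ofPred_eq] at *
    conv_lhs => rw [← hx, ← glAct_mul, inv_mul_cancel, glAct_one]

theorem coeff_glAct_inv_of_val_eq_diagonal {x : GL (Fin n) F} {w : Fin n → F}
    (hx : (x : Matrix (Fin n) (Fin n) F) = diagonal w) (f : MvPolynomial (Fin n) F)
    (μ : Fin n →₀ ℕ) : coeff μ (glAct x⁻¹ f) = (∏ i, w i ^ μ i) * coeff μ f := by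
  have hX : (fun i => ∑ j, ((x⁻¹⁻¹ : GL (Fin n) F) : Matrix (Fin n) (Fin n) F) i j •
      (X j : MvPolynomial (Fin n) F)) = fun i => w i • X i := by
    funext i
    simp [hx, Matrix.diagonal_apply, ite_smul]
  rw [glAct, hX, coeff_aeval_smul_X]

theorem mem_glStabilizer_iff_of_val_eq_diagonal {x : GL (Fin n) F} {w : Fin n → F}
    (hx : (x : Matrix (Fin n) (Fin n) F) = diagonal w) (f : MvPolynomial (Fin n) F) :
    x ∈ glStabilizer f ↔ ∀ μ ∈ f.support, ∏ i, w i ^ μ i = 1 := by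
  rw [← Subgroup.inv_mem_iff]
  change glAct x⁻¹ f = f ↔ _
  rw [MvPolynomial.ext_iff]
  simp only [coeff_glAct_inv_of_val_eq_diagonal hx, mem_support_iff]
  refine forall_congr' fun μ => ⟨fun h hμ => ?_, fun h => ?_⟩
  · exact (mul_eq_right₀ hμ).mp h
  · by_cases hμ : coeff μ f = 0
    · rw [hμ, mul_zero]
    · rw [h hμ, one_mul]

theorem exists_isHomogeneous_le_glStabilizer_iff {G : Subgroup (GL (Fin n) F)}
    {P : (Fin n →₀ ℕ) → Prop} (hG : ∀ f, G ≤ glStabilizer f ↔ ∀ μ ∈ f.support, P μ) (m : ℕ) :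
    (∃ f : MvPolynomial (Fin n) F, f ≠ 0 ∧ f.IsHomogeneous m ∧ G ≤ glStabilizer f) ↔
      ∃ μ : Fin n →₀ ℕ, μ.degree = m ∧ P μ := by
  constructor
  · rintro ⟨f, hf0, hfm, hfG⟩
    obtain ⟨μ, hμ⟩ := support_nonempty.mpr hf0
    exact ⟨μ, not_imp_comm.mp hfm.coeff_eq_zero (mem_support_iff.mp hμ), (hG f).mp hfG μ hμ⟩
  · rintro ⟨μ, hμm, hμ⟩
    refine ⟨monomial μ 1, monomial_eq_zero.not.mpr one_ne_zero,
      hμm ▸ isHomogeneous_monomial 1 rfl, (hG _).mpr fun ν hν => ?_⟩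
    rwa [Finset.mem_singleton.mp (support_monomial_subset hν)]

end

theorem IsPrimitiveRoot.prod_pow_eq_one_iff_dvd {F : Type} [CommMonoid F] {e : ℕ} {lam : F}
    (hlam : IsPrimitiveRoot lam e) (c₀ c₁ : ℕ) (μ : Fin 2 →₀ ℕ) :
    ∏ i, ![lam ^ c₀, lam ^ c₁] i ^ μ i = 1 ↔ e ∣ c₀ * μ 0 + c₁ * μ 1 := by
  rw [← hlam.pow_eq_one_iff_dvd, Fin.prod_univ_two, pow_add, pow_mul, pow_mul]
  rfl

theorem closure_pair_le_glStabilizer_iff {F : Type} [Field F] {e : ℕ} {lam : F}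
    (hlam : IsPrimitiveRoot lam e) {a₀ a₁ b₀ b₁ : ℕ} {A B : GL (Fin 2) F}
    (hA : (A : Matrix (Fin 2) (Fin 2) F) = diagonal ![lam ^ a₀, lam ^ a₁])
    (hB : (B : Matrix (Fin 2) (Fin 2) F) = diagonal ![lam ^ b₀, lam ^ b₁])
    (f : MvPolynomial (Fin 2) F) :
    Subgroup.closure {A, B} ≤ glStabilizer f ↔
      ∀ μ ∈ f.support, e ∣ a₀ * μ 0 + a₁ * μ 1 ∧ e ∣ b₀ * μ 0 + b₁ * μ 1 := by
  simp only [Subgroup.closure_le, Set.insert_subset_iff, Set.singleton_subset_iff,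
    SetLike.mem_coe, mem_glStabilizer_iff_of_val_eq_diagonal hA,
    mem_glStabilizer_iff_of_val_eq_diagonal hB, hlam.prod_pow_eq_one_iff_dvd, ← forall_and]

theorem exists_degree_eq_iff_fin_two {P : ℕ → ℕ → Prop} (m : ℕ) :
    (∃ μ : Fin 2 →₀ ℕ, μ.degree = m ∧ P (μ 0) (μ 1)) ↔ ∃ a₁ a₂ : ℕ, a₁ + a₂ = m ∧ P a₁ a₂ := by
  constructor
  · rintro ⟨μ, hμm, hμ⟩
    refine ⟨μ 0, μ 1, ?_, hμ⟩
    rw [← hμm, Finsupp.degree_eq_sum, Fin.sum_univ_two]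
  · rintro ⟨a₁, a₂, hm, h⟩
    refine ⟨Finsupp.single 0 a₁ + Finsupp.single 1 a₂, ?_, by simpa using h⟩
    rw [map_add, Finsupp.degree_single, Finsupp.degree_single, hm]

theorem stmt12_general {F : Type} [Field F] (e g d j v₁ v₂ : ℕ)
    (he : 0 < e)
    (lam : F) (hlam : IsPrimitiveRoot lam e)
    (A B : GL (Fin 2) F)
    (hA : (A : Matrix (Fin 2) (Fin 2) F) = diagonal ![lam ^ v₁, lam ^ (j * v₂)])
    (hB : (B : Matrix (Fin 2) (Fin 2) F) = diagonal ![lam ^ g, lam ^ (d * g)]) :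
    IsLeast {m : ℕ | 0 < m ∧ ∃ f : MvPolynomial (Fin 2) F, f ≠ 0 ∧ f.IsHomogeneous m ∧
        ∀ x ∈ Subgroup.closure {A, B}, glAct x f = f}
      (sInf {m : ℕ | 0 < m ∧ ∃ a₁ a₂ : ℕ, a₁ + a₂ = m ∧
        e ∣ v₁ * a₁ + j * v₂ * a₂ ∧ e ∣ g * a₁ + d * g * a₂}) := by
  refine (congrArg (IsLeast · _) (Set.ext fun m => and_congr_right fun _ => ?_)).mpr
    (isLeast_csInf ⟨e, he, e, 0, add_zero e, by simp, by simp⟩)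
  exact (exists_isHomogeneous_le_glStabilizer_iff
    (closure_pair_le_glStabilizer_iff hlam hA hB) m).trans (exists_degree_eq_iff_fin_two
      (P := fun a₁ a₂ => e ∣ v₁ * a₁ + j * v₂ * a₂ ∧ e ∣ g * a₁ + d * g * a₂) m)

/-- For the subgroup `G ≤ GL_2(F)` generated by `A = diag(λ^{v₁}, λ^{jv₂})` and
`B = diag(λ^{g}, λ^{dg})` (`λ` a primitive `e`-th root of unity), the minimal degree of
invariants of `G` is the least `a₁ + a₂ > 0` with `v₁a₁ + jv₂a₂ ≡ 0 (mod e)` and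
`ga₁ + dga₂ ≡ 0 (mod e)`. -/
theorem stmt12 {F : Type} [Field F] (e g d j v₁ v₂ : ℕ)
    (he : 0 < e) (hgpos : 0 < g) (hd : 0 < d) (hj : 0 < j)
    (hv₁ : 1 < v₁) (hv₂ : 1 < v₂)
    (hv₁v₂g : v₁ * v₂ ∣ g) (hge : g ∣ e) (hde : d ∣ e)
    (h₁ : Nat.gcd v₁ v₂ = 1) (h₂ : Nat.gcd e j = 1)
    (h₃ : Nat.gcd v₁ d = 1) (h₄ : Nat.gcd v₂ d = 1)
    (lam : F) (hlam : IsPrimitiveRoot lam e)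
    (A B : GL (Fin 2) F)
    (hA : (A : Matrix (Fin 2) (Fin 2) F) = diagonal ![lam ^ v₁, lam ^ (j * v₂)])
    (hB : (B : Matrix (Fin 2) (Fin 2) F) = diagonal ![lam ^ g, lam ^ (d * g)]) :
    IsLeast {m : ℕ | 0 < m ∧ ∃ f : MvPolynomial (Fin 2) F, f ≠ 0 ∧ f.IsHomogeneous m ∧
        ∀ x ∈ Subgroup.closure {A, B}, glAct x f = f}
      (sInf {m : ℕ | 0 < m ∧ ∃ a₁ a₂ : ℕ, a₁ + a₂ = m ∧
        e ∣ v₁ * a₁ + j * v₂ * a₂ ∧ e ∣ g * a₁ + d * g * a₂}) :=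
  stmt12_general e g d j v₁ v₂ he lam hlam A B hA hB
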